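/- arXiv:2310.09801 — 8 statements merged into one kernel-verified Lean document; each statement's English description precedes it below -/
import Mathlib

section
/- For every integer q ≥ 2 that is not of the form 2^n or 3^n for any positive integer n, there exists an integer a with 1 ≤ a < q and gcd(a, q) = 1 such that a/q has a finite simple continued fraction expansion a/q = [a_1, …, a_r] (each a_i a positive integer) with a_i ≤ rad(q) − 1 for all i, where rad(q) is the product of the distinct primes dividing q. -/
/-- The value of the finite simple continued fraction `1/(a₁ + 1/(a₂ + ⋯ + 1/aᵣ))`. -/
def cfVal : List ℕ → ℚ
  | [] => 0
  | a :: l => 1 / (a + cfVal l)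

namespace ZarembaRadical

/-- The continuant (denominator) of a continued fraction word. -/
def den : List ℕ → ℕ
  | [] => 1
  | [a] => a
  | a :: b :: w => a * den (b :: w) + den w

/-- The numerator of a continued fraction word. -/
def num : List ℕ → ℕ
  | [] => 0
  | _ :: w => den w

@[simp] lemma den_nil : den [] = 1 := rfl
@[simp] lemma num_nil : num [] = 0 := rfl
@[simp] lemma num_cons (a : ℕ) (w : List ℕ) : num (a :: w) = den w := rfl

lemma den_cons (a : ℕ) (w : List ℕ) : den (a :: w) = a * den w + num w := by
  cases w <;> simp [den, num]

/-- Second column of the word matrix. -/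
def dd : List ℕ → ℕ × ℕ
  | [] => (0, 1)
  | a :: w => (a * (dd w).1 + (dd w).2, (dd w).1)

@[simp] lemma dd1_nil : (dd ([] : List ℕ)).1 = 0 := rfl
@[simp] lemma dd2_nil : (dd ([] : List ℕ)).2 = 1 := rfl
@[simp] lemma dd1_cons (a : ℕ) (w : List ℕ) : (dd (a :: w)).1 = a * (dd w).1 + (dd w).2 := rfl
@[simp] lemma dd2_cons (a : ℕ) (w : List ℕ) : (dd (a :: w)).2 = (dd w).1 := rfl

lemma append_eq (xs ys : List ℕ) :
    den (xs ++ ys) = den xs * den ys + (dd xs).1 * num ys ∧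
    num (xs ++ ys) = num xs * den ys + (dd xs).2 * num ys ∧
    (dd (xs ++ ys)).1 = den xs * (dd ys).1 + (dd xs).1 * (dd ys).2 ∧
    (dd (xs ++ ys)).2 = num xs * (dd ys).1 + (dd xs).2 * (dd ys).2 := by
  induction xs with
  | nil => simp
  | cons a xs ih =>
    obtain ⟨h1, h2, h3, h4⟩ := ih
    refine ⟨?_, ?_, ?_, ?_⟩ <;>
      simp only [List.cons_append, den_cons, num_cons, dd1_cons, dd2_cons, h1, h2, h3, h4] <;>
      ring

lemma reverse_eq (w : List ℕ) :
    den w.reverse = den w ∧ num w.reverse = (dd w).1 ∧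
    (dd w.reverse).1 = num w ∧ (dd w.reverse).2 = (dd w).2 := by
  induction w with
  | nil => simp
  | cons a w ih =>
    obtain ⟨h1, h2, h3, h4⟩ := ih
    obtain ⟨g1, g2, g3, g4⟩ := append_eq w.reverse [a]
    simp only [List.reverse_cons]
    refine ⟨?_, ?_, ?_, ?_⟩ <;>
      simp only [g1, g2, g3, g4, h1, h2, h3, h4, den_cons, num_cons, dd1_cons, dd2_cons,
        den_nil, num_nil, dd1_nil, dd2_nil] <;>
      ring

lemma den_reverse (w : List ℕ) : den w.reverse = den w := (reverse_eq w).1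

lemma dd1_reverse (w : List ℕ) : (dd w.reverse).1 = num w := (reverse_eq w).2.2.1

/-- The main folding identity, for `t = s+2 ≥ 2`. -/
lemma fold2 (s b : ℕ) (w' : List ℕ) :
    den (((b+2) :: w').reverse ++ (s+1) :: 1 :: (b+1) :: w') = (s+2) * den ((b+2) :: w') ^ 2 := by
  rw [(append_eq (((b+2) :: w').reverse) ((s+1) :: 1 :: (b+1) :: w')).1,
    den_reverse, dd1_reverse]
  simp only [den_cons, num_cons]
  ring

/-- The folding identity for `t = 1`. -/
lemma fold1 (b : ℕ) (w' : List ℕ) :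
    den (w'.reverse ++ (b+3) :: (b+1) :: w') = den ((b+2) :: w') ^ 2 := by
  rw [(append_eq (w'.reverse) ((b+3) :: (b+1) :: w')).1, den_reverse, dd1_reverse]
  simp only [den_cons, num_cons]
  ring

lemma den_pos : ∀ w : List ℕ, (∀ x ∈ w, 1 ≤ x) → 1 ≤ den w := by
  intro w
  induction w with
  | nil => simp
  | cons a w ih =>
    intro h
    have ha : 1 ≤ a := h a (by simp)
    have hw : 1 ≤ den w := ih (fun x hx => h x (by simp [hx]))
    rw [den_cons]
    have : 1 * 1 ≤ a * den w := Nat.mul_le_mul ha hw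
    omega

lemma num_lt_den (w : List ℕ) (h1 : ∀ x ∈ w, 1 ≤ x) (h2 : 2 ≤ den w) : num w < den w := by
  match w with
  | [] => simp at h2
  | [a] =>
    have : den [a] = a := by simp [den]
    simp only [num_cons, den_nil]
    omega
  | a :: b :: w =>
    have ha : 1 ≤ a := h1 a (by simp)
    have hw : 1 ≤ den (b :: w) := den_pos _ (fun x hx => h1 x (by simp [hx]))
    have hw2 : 1 ≤ num (b :: w) := by
      rw [num_cons]
      exact den_pos _ (fun x hx => h1 x (by simp [hx]))
    rw [den_cons, num_cons]
    have : 1 * den (b :: w) ≤ a * den (b :: w) := Nat.mul_le_mul_right _ ha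
    omega

lemma coprime_num_den : ∀ w : List ℕ, Nat.gcd (num w) (den w) = 1 := by
  intro w
  induction w with
  | nil => simp
  | cons a w ih =>
    rw [num_cons, den_cons, add_comm (a * den w) (num w), Nat.gcd_add_mul_right_right,
      Nat.gcd_comm]
    exact ih

lemma cfVal_eq : ∀ w : List ℕ, (∀ x ∈ w, 1 ≤ x) → cfVal w = (num w : ℚ) / (den w : ℚ) := by
  intro w
  induction w with
  | nil => simp [cfVal]
  | cons a w ih =>
    intro h
    have hw := ih (fun x hx => h x (by simp [hx]))
    have hd : 0 < (den w : ℚ) := by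
      exact_mod_cast den_pos w (fun x hx => h x (by simp [hx]))
    have ha : (1:ℚ) ≤ (a : ℚ) := by exact_mod_cast h a (by simp)
    have hn : (0:ℚ) ≤ (num w : ℚ) := by positivity
    have hden2 : (0:ℚ) < (a : ℚ) * (den w : ℚ) + (num w : ℚ) := by nlinarith
    simp only [cfVal, hw, num_cons, den_cons]
    push_cast
    rw [div_eq_div_iff (by nlinarith [div_nonneg hn hd.le]) (by nlinarith)]
    field_simp

/-- A "good" word for `M` with entries bounded by `B` and both ends in `[2, B-1]`. -/
def Q (B M : ℕ) : Prop :=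
  ∃ b v c, den (b :: v ++ [c]) = M ∧ (∀ x ∈ b :: v ++ [c], 1 ≤ x ∧ x ≤ B) ∧
    2 ≤ b ∧ b + 1 ≤ B ∧ 2 ≤ c ∧ c + 1 ≤ B

lemma fold {B M t : ℕ} (hB : 4 ≤ B) (ht1 : 1 ≤ t) (ht : t ≤ B + 1) (h : Q B M) :
    Q B (t * M ^ 2) := by
  obtain ⟨b, v, c, hden, hent, hb2, hbB, hc2, hcB⟩ := h
  obtain ⟨b', rfl⟩ : ∃ b', b = b' + 2 := ⟨b - 2, by omega⟩
  have hv : ∀ x ∈ v, 1 ≤ x ∧ x ≤ B := fun x hx => hent x (by simp [hx])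
  have hden' : den ((b' + 2) :: (v ++ [c])) = M := by rw [← List.cons_append]; exact hden
  rcases Nat.lt_or_ge t 2 with ht2 | ht2
  · -- t = 1
    have ht1' : t = 1 := by omega
    subst ht1'
    refine ⟨c, v.reverse ++ [b'+3, b'+1] ++ v, c, ?_, ?_, hc2, hcB, hc2, hcB⟩
    · have hl : (c :: (v.reverse ++ [b'+3, b'+1] ++ v) ++ [c])
          = ((v ++ [c]).reverse ++ (b'+3) :: (b'+1) :: (v ++ [c])) := by
        simp [List.append_assoc]
      rw [hl, fold1 b' (v ++ [c]), hden']
      ring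
    · intro x hx
      have hxor : x = c ∨ x ∈ v ∨ x = b'+3 ∨ x = b'+1 := by
        simp at hx
        tauto
      rcases hxor with rfl | hx | rfl | rfl
      · omega
      · exact hv x hx
      · omega
      · omega
  · -- t = s + 2
    obtain ⟨s, rfl⟩ : ∃ s, t = s + 2 := ⟨t - 2, by omega⟩
    refine ⟨c, v.reverse ++ [b'+2, s+1, 1, b'+1] ++ v, c, ?_, ?_, hc2, hcB, hc2, hcB⟩
    · have hl : (c :: (v.reverse ++ [b'+2, s+1, 1, b'+1] ++ v) ++ [c])
          = (((b'+2) :: (v ++ [c])).reverse ++ (s+1) :: 1 :: (b'+1) :: (v ++ [c])) := by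
        simp [List.append_assoc]
      rw [hl, fold2 s b' (v ++ [c]), hden']
    · intro x hx
      have hb'B : b' + 2 ≤ B := by omega
      have hxor : x = c ∨ x ∈ v ∨ x = b'+2 ∨ x = s+1 ∨ x = 1 ∨ x = b'+1 := by
        simp at hx
        tauto
      rcases hxor with rfl | hx | rfl | rfl | rfl | rfl
      · omega
      · exact hv x hx
      · omega
      · omega
      · omega
      · omega

/-- Base case: good words for all `5 ≤ M ≤ B + 1`, `M ≠ 6`. -/
lemma base {B M : ℕ} (hB : 4 ≤ B) (hM5 : 5 ≤ M) (hM6 : M ≠ 6) (hMB : M ≤ B + 1)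
    (heven : 2 ∣ M → 5 ≤ B) : Q B M := by
  by_cases hodd : M % 2 = 1
  · refine ⟨2, [], M / 2, ?_, ?_, by omega, by omega, by omega, by omega⟩
    · simp [den_cons]
      omega
    · intro x hx
      simp at hx
      omega
  · have h5B : 5 ≤ B := heven (by omega)
    by_cases h4 : M % 4 = 0
    · refine ⟨2, [M / 4 - 1], 2, ?_, ?_, by omega, by omega, by omega, by omega⟩
      · simp [den_cons]
        omega
      · intro x hx
        simp at hx
        omega
    · by_cases h8 : M % 8 = 2
      · by_cases h10 : M = 10
        · subst h10
          refine ⟨3, [], 3, by simp [den_cons], ?_, by omega, by omega, by omega, by omega⟩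
          intro x hx
          simp at hx
          omega
        · -- M ≥ 18, M = 8A + 10
          refine ⟨2, [(M - 10) / 8, 1], 3, ?_, ?_, by omega, by omega, by omega, by omega⟩
          · simp [den_cons]
            omega
          · intro x hx
            simp at hx
            omega
      · -- M % 8 = 6, M ≥ 14
        refine ⟨4, [(M - 6) / 8], 2, ?_, ?_, by omega, by omega, by omega, by omega⟩
        · simp [den_cons]
          omega
        · intro x hx
          simp at hx
          omega

lemma crux (q R : ℕ) (hq : 2 ≤ q) (hR : R = ∏ p ∈ q.primeFactors, p) (hR5 : 5 ≤ R) :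
    ∀ M, 2 ≤ M → M.primeFactors ⊆ q.primeFactors →
      M = 2 ∨ M = 3 ∨ M = 4 ∨ M = 6 ∨ Q (R - 1) M := by
  intro M
  induction M using Nat.strong_induction_on with
  | _ M ih =>
  intro hM2 hsub
  have hM0 : M ≠ 0 := by omega
  have hq0 : q ≠ 0 := by omega
  have hpR : ∀ p : ℕ, p.Prime → p ∣ M → p ∣ R := by
    intro p hp hpM
    have hmem : p ∈ q.primeFactors := hsub (Nat.mem_primeFactors.2 ⟨hp, hpM, hM0⟩)
    rw [hR]
    exact Finset.dvd_prod_of_mem _ hmem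
  by_cases hMR : M ≤ R
  · by_cases hexc : M = 2 ∨ M = 3 ∨ M = 4 ∨ M = 6
    · tauto
    · push_neg at hexc
      right; right; right; right
      exact base (by omega) (by omega) (by omega) (by omega)
        (fun hdvd => by have := hpR 2 Nat.prime_two hdvd; omega)
  · obtain ⟨t, m, hfac, hsf⟩ := Nat.sq_mul_squarefree M
    have ht0 : t ≠ 0 := by
      rintro rfl
      simp at hfac
      omega
    have htM : t ∣ M := ⟨m ^ 2, by rw [← hfac]; ring⟩
    have hmM : m ∣ M := ⟨m * t, by rw [← hfac]; ring⟩
    have htR : t ∣ R := by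
      have hs1 : t.primeFactors ⊆ q.primeFactors := (Nat.primeFactors_mono htM hM0).trans hsub
      have hs2 : ∏ p ∈ t.primeFactors, p ∣ ∏ p ∈ q.primeFactors, p :=
        Finset.prod_dvd_prod_of_subset _ _ _ hs1
      rwa [Nat.prod_primeFactors_of_squarefree hsf, ← hR] at hs2
    have htR' : t ≤ R := Nat.le_of_dvd (by omega) htR
    have hm2 : 2 ≤ m := by
      by_contra hcon
      push_neg at hcon
      interval_cases m
      · simp at hfac; omega
      · have : t = M := by simpa using hfac
        omega
    have hmlt : m < M := by
      have h1t : 1 ≤ t := by omega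
      calc m < m * m := by nlinarith
        _ ≤ m ^ 2 * t := by nlinarith
        _ = M := hfac
    have hsubm : m.primeFactors ⊆ q.primeFactors := (Nat.primeFactors_mono hmM hM0).trans hsub
    rcases ih m hmlt hm2 hsubm with rfl | rfl | rfl | rfl | hQm
    · -- m = 2, M = 4t
      have hM4 : M = 4 * t := by rw [← hfac]; ring
      have hR6 : 6 ≤ R := by
        have := hpR 2 Nat.prime_two ⟨2 * t, by omega⟩
        omega
      have ht2 : 2 ≤ t := by omega
      right; right; right; right
      refine ⟨2, [t - 1], 2, ?_, ?_, by omega, by omega, by omega, by omega⟩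
      · simp [den_cons]; omega
      · intro x hx; simp at hx; omega
    · -- m = 3, M = 9t
      have hM9 : M = 9 * t := by rw [← hfac]; ring
      have hR6 : 6 ≤ R := by
        have := hpR 3 Nat.prime_three ⟨3 * t, by omega⟩
        omega
      right; right; right; right
      rcases Nat.lt_or_ge t 2 with ht2 | ht2
      · have ht1 : t = 1 := by omega
        subst ht1
        refine ⟨2, [], 4, ?_, ?_, by omega, by omega, by omega, by omega⟩
        · simp [den_cons]; omega
        · intro x hx; simp at hx; omega
      · refine ⟨3, [t - 1, 1], 2, ?_, ?_, by omega, by omega, by omega, by omega⟩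
        · simp [den_cons]; omega
        · intro x hx; simp at hx; omega
    · -- m = 4, M = 16t
      have hM16 : M = 16 * t := by rw [← hfac]; ring
      have hR6 : 6 ≤ R := by
        have := hpR 2 Nat.prime_two ⟨8 * t, by omega⟩
        omega
      right; right; right; right
      rcases Nat.lt_or_ge t 2 with ht2 | ht2
      · have ht1 : t = 1 := by omega
        subst ht1
        refine ⟨2, [3], 2, ?_, ?_, by omega, by omega, by omega, by omega⟩
        · simp [den_cons]; omega
        · intro x hx; simp at hx; omega
      · refine ⟨4, [t - 1, 1], 3, ?_, ?_, by omega, by omega, by omega, by omega⟩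
        · simp [den_cons]; omega
        · intro x hx; simp at hx; omega
    · -- m = 6, M = 36t
      have hM36 : M = 36 * t := by rw [← hfac]; ring
      have h2mem : 2 ∈ q.primeFactors :=
        hsub (Nat.mem_primeFactors.2 ⟨Nat.prime_two, ⟨18 * t, by omega⟩, hM0⟩)
      have h3mem : 3 ∈ q.primeFactors :=
        hsub (Nat.mem_primeFactors.2 ⟨Nat.prime_three, ⟨12 * t, by omega⟩, hM0⟩)
      have h23sub : ({2, 3} : Finset ℕ) ⊆ q.primeFactors := by
        intro x hx
        simp at hx
        rcases hx with rfl | rfl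
        · exact h2mem
        · exact h3mem
      have hsplit : R = (∏ p ∈ q.primeFactors \ {2, 3}, p) * 6 := by
        have h6 : (∏ p ∈ ({2, 3} : Finset ℕ), p) = 6 := by decide
        rw [hR, ← Finset.prod_sdiff h23sub, h6]
      have hR630 : R = 6 ∨ 30 ≤ R := by
        rcases Finset.eq_empty_or_nonempty (q.primeFactors \ {2, 3}) with he | ⟨p, hp⟩
        · left
          rw [hsplit, he]
          simp
        · right
          have hpmem := Finset.mem_sdiff.1 hp
          have hp' : p.Prime := Nat.prime_of_mem_primeFactors hpmem.1
          have hpne : p ≠ 2 ∧ p ≠ 3 := by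
            have := hpmem.2
            simp at this
            tauto
          have hp5 : 5 ≤ p := by
            have h2le := hp'.two_le
            by_contra hlt
            push_neg at hlt
            interval_cases p
            · exact hpne.1 rfl
            · exact hpne.2 rfl
            · exact absurd hp' (by decide)
          have hP : p ≤ ∏ p ∈ q.primeFactors \ {2, 3}, p :=
            Finset.single_le_prod'
              (fun i hi => (Nat.prime_of_mem_primeFactors (Finset.mem_sdiff.1 hi).1).one_lt.le)
              hp
          omega
      right; right; right; right
      rcases hR630 with hR6 | hR30
      · subst hR6
        have ht6 : t ∣ 6 := htR
        have ht6' : t ≤ 6 := Nat.le_of_dvd (by norm_num) ht6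
        have ht1 : 1 ≤ t := by omega
        interval_cases t
        · refine ⟨2, [1, 3], 3, ?_, ?_, by omega, by omega, by omega, by omega⟩
          · simp [den_cons]; omega
          · intro x hx; simp at hx; omega
        · refine ⟨4, [4], 4, ?_, ?_, by omega, by omega, by omega, by omega⟩
          · simp [den_cons]; omega
          · intro x hx; simp at hx; omega
        · refine ⟨2, [3, 2, 1], 4, ?_, ?_, by omega, by omega, by omega, by omega⟩
          · simp [den_cons]; omega
          · intro x hx; simp at hx; omega
        · exact absurd ht6 (by decide)
        · exact absurd ht6 (by decide)
        · refine ⟨2, [4, 2, 2], 4, ?_, ?_, by omega, by omega, by omega, by omega⟩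
          · simp [den_cons]; omega
          · intro x hx; simp at hx; omega
      · rcases Nat.lt_or_ge t 2 with ht2 | ht2
        · have ht1 : t = 1 := by omega
          subst ht1
          refine ⟨7, [], 5, ?_, ?_, by omega, by omega, by omega, by omega⟩
          · simp [den_cons]; omega
          · intro x hx; simp at hx; omega
        · refine ⟨6, [t - 1, 1], 5, ?_, ?_, by omega, by omega, by omega, by omega⟩
          · simp [den_cons]; omega
          · intro x hx; simp at hx; omega
    · -- Q case : fold
      right; right; right; right
      have hfold := fold (B := R - 1) (M := m) (t := t) (by omega) (by omega) (by omega) hQm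
      rwa [show t * m ^ 2 = M from by rw [← hfac]; ring] at hfold

lemma package (q B : ℕ) (hq : 2 ≤ q) (L : List ℕ) (hden : den L = q)
    (hent : ∀ x ∈ L, 1 ≤ x ∧ x ≤ B) :
    ∃ a : ℕ, 1 ≤ a ∧ a < q ∧ Nat.gcd a q = 1 ∧
      ∃ L' : List ℕ, (a : ℚ) / q = cfVal L' ∧ ∀ x ∈ L', 0 < x ∧ x ≤ B := by
  have h1 : ∀ x ∈ L, 1 ≤ x := fun x hx => (hent x hx).1
  have hLne : L ≠ [] := by
    intro h
    rw [h] at hden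
    simp at hden
    omega
  have hnum1 : 1 ≤ num L := by
    match L, hLne with
    | a :: w, _ =>
      simpa using den_pos w (fun x hx => h1 x (by simp [hx]))
  refine ⟨num L, hnum1, ?_, ?_, L, ?_, fun x hx => ⟨h1 x hx, (hent x hx).2⟩⟩
  · rw [← hden]
    exact num_lt_den L h1 (by omega)
  · rw [← hden]
    exact coprime_num_den L
  · rw [← hden, cfVal_eq L h1]

end ZarembaRadical

/-- For every integer `q ≥ 2` not a power `2^n` or `3^n` (with `n ≥ 1`), there is
`1 ≤ a < q` coprime to `q` whose continued fraction expansion has all partial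
quotients bounded by `rad(q) - 1`, where `rad(q) = ∏ p ∈ q.primeFactors, p`. -/
theorem radical_bound_for_zaremba (q : ℕ) (hq : 2 ≤ q)
    (h2 : ∀ n : ℕ, 0 < n → q ≠ 2 ^ n) (h3 : ∀ n : ℕ, 0 < n → q ≠ 3 ^ n) :
    ∃ a : ℕ, 1 ≤ a ∧ a < q ∧ Nat.gcd a q = 1 ∧
      ∃ L : List ℕ, (a : ℚ) / q = cfVal L ∧
        ∀ x ∈ L, 0 < x ∧ x ≤ (∏ p ∈ q.primeFactors, p) - 1 := by
  classical
  open ZarembaRadical in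
  set R := ∏ p ∈ q.primeFactors, p with hRdef
  have hq0 : q ≠ 0 := by omega
  have hRq : R ∣ q := Nat.prod_primeFactors_dvd q
  have hRpos : 0 < R := Finset.prod_pos fun p hp => (Nat.prime_of_mem_primeFactors hp).pos
  have hpow : ∀ r : ℕ, (∀ d : ℕ, d.Prime → d ∣ q → d = r) → ∃ n, 0 < n ∧ q = r ^ n := by
    intro r hall
    have hq' := Nat.eq_prime_pow_of_unique_prime_dvd hq0 (fun {d} hd hdq => hall d hd hdq)
    refine ⟨q.primeFactorsList.length, ?_, hq'⟩
    by_contra hl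
    push_neg at hl
    have hzero : q.primeFactorsList.length = 0 := by omega
    rw [hzero, pow_zero] at hq'
    omega
  have hall_of : ∀ r : ℕ, R = r → ∀ d : ℕ, d.Prime → d ∣ q → d ∣ r := by
    intro r hr d hd hdq
    have hdR : d ∣ R := by
      rw [hRdef]
      exact Finset.dvd_prod_of_mem _ (Nat.mem_primeFactors.2 ⟨hd, hdq, hq0⟩)
    rwa [hr] at hdR
  have hR2ne : R ≠ 2 := by
    intro h
    obtain ⟨n, hn, hqn⟩ := hpow 2 (fun d hd hdq =>
      (Nat.prime_dvd_prime_iff_eq hd Nat.prime_two).1 (hall_of 2 h d hd hdq))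
    exact h2 n hn hqn
  have hR3ne : R ≠ 3 := by
    intro h
    obtain ⟨n, hn, hqn⟩ := hpow 3 (fun d hd hdq =>
      (Nat.prime_dvd_prime_iff_eq hd Nat.prime_three).1 (hall_of 3 h d hd hdq))
    exact h3 n hn hqn
  have hR4ne : R ≠ 4 := by
    intro h
    have hsub2 : q.primeFactors ⊆ {2} := by
      intro p hp
      have hp' := Nat.prime_of_mem_primeFactors hp
      have hdR : p ∣ (4 : ℕ) :=
        hall_of 4 h p hp' (Nat.dvd_of_mem_primeFactors hp)
      have hple : p ≤ 4 := Nat.le_of_dvd (by norm_num) hdR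
      have h2le := hp'.two_le
      have : p = 2 := by
        interval_cases p
        · rfl
        · exact absurd hdR (by decide)
        · exact absurd hp' (by decide)
      simp [this]
    have hdvd2 : R ∣ 2 := by
      rw [hRdef]
      have := Finset.prod_dvd_prod_of_subset _ _ (fun p => p) hsub2
      simpa using this
    have := Nat.le_of_dvd (by norm_num) hdvd2
    omega
  have hne : q.primeFactors.Nonempty := Nat.nonempty_primeFactors.2 (by omega)
  obtain ⟨p0, hp0⟩ := hne
  have hp0' := Nat.prime_of_mem_primeFactors hp0
  have hp0R : p0 ∣ R := by
    rw [hRdef]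
    exact Finset.dvd_prod_of_mem _ hp0
  have hR2 : 2 ≤ R := le_trans hp0'.two_le (Nat.le_of_dvd hRpos hp0R)
  have hR5 : 5 ≤ R := by omega
  by_cases hqR : q ≤ R
  · exact package q (R - 1) hq [1, q - 1]
      (by simp [den_cons]; omega)
      (by intro x hx; simp at hx; omega)
  · rcases crux q R hq hRdef hR5 q hq (subset_refl _) with rfl | rfl | rfl | rfl | hQ
    · omega
    · omega
    · omega
    · have hle : R ≤ 6 := Nat.le_of_dvd (by norm_num) hRq
      interval_cases R
      exact absurd hRq (by decide)
    · obtain ⟨b, v, c, hden, hent, _, _, _, _⟩ := hQ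
      exact package q (R - 1) hq (b :: v ++ [c]) hden hent
end

section
/- For every prime p ≥ 5 and every positive integer n, setting q = p^n, there exists an integer a with 1 ≤ a < q and gcd(a, q) = 1 such that a/q has a finite simple continued fraction expansion a/q = [a_1, …, a_r] (each a_i a positive integer) with a_i ≤ p − 1 for all i. -/
namespace Zaremba

open Matrix

/-- `contMat [a₁, …, aᵣ] = !![K(a₁ … aᵣ), K(a₁ … aᵣ₋₁); K(a₂ … aᵣ), K(a₂ … aᵣ₋₁)]`, where `K` is the
continuant, so that `[a₁, …, aᵣ]` has value `K(a₂ … aᵣ) / K(a₁ … aᵣ)`. -/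
def contMat (L : List ℕ) : Matrix (Fin 2) (Fin 2) ℕ :=
  (L.map fun a => !![a, 1; 1, 0]).prod

@[simp] lemma contMat_nil : contMat [] = 1 := rfl

lemma contMat_cons (a : ℕ) (L : List ℕ) : contMat (a :: L) = !![a, 1; 1, 0] * contMat L := rfl

lemma contMat_append (u v : List ℕ) : contMat (u ++ v) = contMat u * contMat v := by
  simp [contMat]

lemma contMat_reverse (L : List ℕ) : contMat L.reverse = (contMat L)ᵀ := by
  simp only [contMat, Matrix.transpose_list_prod, List.map_reverse, List.map_map]
  congr 2
  refine List.map_congr_left fun a _ => ?_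
  ext i j; fin_cases i <;> fin_cases j <;> rfl

@[simp] lemma contMat_cons_zero_zero (a : ℕ) (L : List ℕ) :
    contMat (a :: L) 0 0 = a * contMat L 0 0 + contMat L 1 0 := by
  simp [contMat_cons, Matrix.mul_apply, Fin.sum_univ_two]

@[simp] lemma contMat_cons_zero_one (a : ℕ) (L : List ℕ) :
    contMat (a :: L) 0 1 = a * contMat L 0 1 + contMat L 1 1 := by
  simp [contMat_cons, Matrix.mul_apply, Fin.sum_univ_two]

@[simp] lemma contMat_cons_one_zero (a : ℕ) (L : List ℕ) :
    contMat (a :: L) 1 0 = contMat L 0 0 := by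
  simp [contMat_cons, Matrix.mul_apply, Fin.sum_univ_two]

@[simp] lemma contMat_cons_one_one (a : ℕ) (L : List ℕ) :
    contMat (a :: L) 1 1 = contMat L 0 1 := by
  simp [contMat_cons, Matrix.mul_apply, Fin.sum_univ_two]

lemma contMat_zero_zero_pos {L : List ℕ} (hL : ∀ x ∈ L, 0 < x) : 0 < contMat L 0 0 := by
  induction L with
  | nil => simp
  | cons a L ih =>
    rw [List.forall_mem_cons] at hL
    rw [contMat_cons_zero_zero]
    exact Nat.add_pos_left (Nat.mul_pos hL.1 (ih hL.2)) _

lemma coprime_contMat (L : List ℕ) : Nat.Coprime (contMat L 1 0) (contMat L 0 0) := by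
  induction L with
  | nil => simp
  | cons a L ih =>
    simpa [Nat.Coprime, mul_comm, add_comm] using ih.symm

lemma cfVal_eq_div {L : List ℕ} (hL : ∀ x ∈ L, 0 < x) :
    cfVal L = (contMat L 1 0 : ℚ) / contMat L 0 0 := by
  induction L with
  | nil => simp [cfVal]
  | cons a L ih =>
    rw [List.forall_mem_cons] at hL
    have hK : (0 : ℚ) < contMat L 0 0 := by exact_mod_cast contMat_zero_zero_pos hL.2
    have ha : (0 : ℚ) < a := by exact_mod_cast hL.1
    rw [cfVal, ih hL.2, contMat_cons_zero_zero, contMat_cons_one_zero]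
    push_cast
    field_simp

lemma contMat_append_singleton_zero_zero (u : List ℕ) (b : ℕ) :
    contMat (u ++ [b]) 0 0 = contMat u 0 0 * b + contMat u 0 1 := by
  simp [contMat_append, contMat_cons, Matrix.mul_apply, Fin.sum_univ_two]

lemma contMat_append_append_reverse_zero_zero (u v : List ℕ) :
    contMat (u ++ v ++ u.reverse) 0 0 =
      contMat u 0 0 ^ 2 * contMat v 0 0 +
        contMat u 0 0 * contMat u 0 1 * (contMat v 0 1 + contMat v 1 0) +
          contMat u 0 1 ^ 2 * contMat v 1 1 := by
  simp only [contMat_append, contMat_reverse, Matrix.mul_apply, Fin.sum_univ_two,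
    Matrix.transpose_apply]
  ring

lemma contMat_fold_eq_sq (u : List ℕ) {b : ℕ} (hb : 0 < b) :
    contMat (u ++ [b + 1, b - 1] ++ u.reverse) 0 0 = contMat (u ++ [b]) 0 0 ^ 2 := by
  obtain ⟨b, rfl⟩ : ∃ c, b = c + 1 := ⟨b - 1, by omega⟩
  rw [contMat_append_append_reverse_zero_zero, contMat_append_singleton_zero_zero]
  simp only [contMat_cons_zero_zero, contMat_cons_zero_one, contMat_cons_one_zero,
    contMat_cons_one_one, contMat_nil, Nat.add_sub_cancel, Matrix.one_apply_eq,
    Matrix.one_apply_ne, ne_eq, zero_ne_one, one_ne_zero, not_false_eq_true]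
  ring

lemma contMat_fold_eq_mul_sq (u : List ℕ) {b : ℕ} (hb : 0 < b) (d : ℕ) :
    contMat (u ++ [b, d, 1, b - 1] ++ u.reverse) 0 0 =
      (d + 1) * contMat (u ++ [b]) 0 0 ^ 2 := by
  obtain ⟨b, rfl⟩ : ∃ c, b = c + 1 := ⟨b - 1, by omega⟩
  rw [contMat_append_append_reverse_zero_zero, contMat_append_singleton_zero_zero]
  simp only [contMat_cons_zero_zero, contMat_cons_zero_one, contMat_cons_one_zero,
    contMat_cons_one_one, contMat_nil, Nat.add_sub_cancel, Matrix.one_apply_eq,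
    Matrix.one_apply_ne, ne_eq, zero_ne_one, one_ne_zero, not_false_eq_true]
  ring

lemma exists_contMat_eq_pow {p : ℕ} (hp : Odd p) (hp5 : 5 ≤ p) {n : ℕ} (hn : 0 < n) :
    ∃ t b, 2 ≤ b ∧ b ≤ p - 2 ∧ (∀ x ∈ t, 0 < x ∧ x ≤ p - 1) ∧
      contMat (2 :: t ++ [b]) 0 0 = p ^ n := by
  induction n using Nat.strong_induction_on with
  | _ n ih =>
  obtain rfl | hn1 := (Nat.one_le_iff_ne_zero.mpr hn.ne').eq_or_lt
  · obtain ⟨k, rfl⟩ := hp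
    exact ⟨[], k, by omega, by omega, by simp, by simp⟩
  obtain ⟨m, hm⟩ := Nat.even_or_odd' n
  obtain ⟨t, b, hb2, hbp, ht, hK⟩ := ih m (by omega) (by omega)
  -- the leading `2` is mirrored to the end, so every folded word again ends in `2`
  have hmirror (v : List ℕ) :
      2 :: (t ++ v ++ t.reverse) ++ [2] = 2 :: t ++ v ++ (2 :: t).reverse := by
    simp
  rcases hm with rfl | rfl
  · refine ⟨t ++ [b + 1, b - 1] ++ t.reverse, 2, le_rfl, by omega, ?_, ?_⟩
    · simp only [List.forall_mem_append, List.forall_mem_cons, List.mem_reverse]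
      exact ⟨⟨ht, by omega, by omega, by simp⟩, fun x hx => ht x hx⟩
    · rw [hmirror, contMat_fold_eq_sq _ (by omega), hK, pow_mul']
  · refine ⟨t ++ [b, p - 1, 1, b - 1] ++ t.reverse, 2, le_rfl, by omega, ?_, ?_⟩
    · simp only [List.forall_mem_append, List.forall_mem_cons, List.mem_reverse]
      exact ⟨⟨ht, by omega, by omega, by omega, by omega, by simp⟩, fun x hx => ht x hx⟩
    · rw [hmirror, contMat_fold_eq_mul_sq _ (by omega), hK, Nat.sub_add_cancel (by omega)]
      ring

end Zaremba

open Zaremba in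
/-- For every prime `p ≥ 5` and `n ≥ 1`, with `q = p^n` there is `1 ≤ a < q`
coprime to `q` with all partial quotients of `a/q` at most `p - 1`. -/
theorem zaremba_prime_power (p : ℕ) (hp : p.Prime) (hp5 : 5 ≤ p) (n : ℕ) (hn : 0 < n) :
    ∃ a : ℕ, 1 ≤ a ∧ a < p ^ n ∧ Nat.gcd a (p ^ n) = 1 ∧
      ∃ L : List ℕ, (a : ℚ) / (p ^ n) = cfVal L ∧
        ∀ x ∈ L, 0 < x ∧ x ≤ p - 1 := by
  obtain ⟨t, b, hb2, hbp, ht, hK⟩ := exists_contMat_eq_pow (hp.odd_of_ne_two (by omega)) hp5 hn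
  rw [List.cons_append] at hK
  have hL : ∀ x ∈ 2 :: (t ++ [b]), 0 < x ∧ x ≤ p - 1 := by
    simp only [List.forall_mem_cons, List.forall_mem_append]
    exact ⟨by omega, ht, by omega, by simp⟩
  have hpos : ∀ x ∈ 2 :: (t ++ [b]), 0 < x := fun x hx => (hL x hx).1
  have ha : 0 < contMat (t ++ [b]) 0 0 :=
    contMat_zero_zero_pos fun x hx => hpos x (List.mem_cons_of_mem 2 hx)
  refine ⟨contMat (t ++ [b]) 0 0, ha, ?_, ?_, 2 :: (t ++ [b]), ?_, hL⟩
  · rw [← hK, contMat_cons_zero_zero]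
    omega
  · rw [← hK, ← contMat_cons_one_zero 2]
    exact coprime_contMat _
  · rw [cfVal_eq_div hpos, contMat_cons_one_zero, hK, Nat.cast_pow]
end

section
/- For every positive integer n, setting q = 6^n, there exists an integer a with 1 ≤ a < q and gcd(a, q) = 1 such that a/q has a finite simple continued fraction expansion a/q = [a_1, …, a_r] (each a_i a positive integer) with a_i ≤ 5 for all i. -/
open Matrix

def contMat (l : List ℕ) : Matrix (Fin 2) (Fin 2) ℕ := (l.map fun a => !![a, 1; 1, 0]).prod

@[simp] lemma contMat_nil : contMat [] = 1 := rfl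

lemma contMat_cons (a : ℕ) (l : List ℕ) : contMat (a :: l) = !![a, 1; 1, 0] * contMat l := rfl

lemma contMat_append (l₁ l₂ : List ℕ) : contMat (l₁ ++ l₂) = contMat l₁ * contMat l₂ := by
  simp [contMat]

lemma contMat_reverse (l : List ℕ) : contMat l.reverse = (contMat l)ᵀ := by
  have h (a : ℕ) : (!![a, 1; 1, 0])ᵀ = !![a, 1; 1, 0] := by
    ext i j; fin_cases i <;> fin_cases j <;> rfl
  simp [contMat, transpose_list_prod, Function.comp_def, h]

lemma contMat_cons_zero_zero (a : ℕ) (l : List ℕ) :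
    contMat (a :: l) 0 0 = a * contMat l 0 0 + contMat l 1 0 := by
  simp [contMat_cons, mul_apply, Fin.sum_univ_two]

lemma contMat_cons_one_zero (a : ℕ) (l : List ℕ) : contMat (a :: l) 1 0 = contMat l 0 0 := by
  simp [contMat_cons, mul_apply, Fin.sum_univ_two]

lemma contMat_cons_zero_one (a : ℕ) (l : List ℕ) :
    contMat (a :: l) 0 1 = a * contMat l 0 1 + contMat l 1 1 := by
  simp [contMat_cons, mul_apply, Fin.sum_univ_two]

lemma contMat_cons_one_one (a : ℕ) (l : List ℕ) : contMat (a :: l) 1 1 = contMat l 0 1 := by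
  simp [contMat_cons, mul_apply, Fin.sum_univ_two]

lemma contMat_reverse_append_append_zero_zero (v w : List ℕ) :
    contMat (v.reverse ++ w ++ v) 0 0 =
      contMat w 0 0 * contMat v 0 0 ^ 2
        + (contMat w 0 1 + contMat w 1 0) * contMat v 0 0 * contMat v 1 0
        + contMat w 1 1 * contMat v 1 0 ^ 2 := by
  simp only [contMat_append, contMat_reverse, mul_apply, Fin.sum_univ_two, transpose_apply]
  ring

lemma contMat_fold_sq (d : ℕ) (v : List ℕ) :
    contMat (v.reverse ++ [d, d + 2] ++ v) 0 0 = contMat ((d + 1) :: v) 0 0 ^ 2 := by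
  rw [contMat_reverse_append_append_zero_zero, contMat_cons_zero_zero]
  simp only [contMat_cons_zero_zero, contMat_cons_zero_one, contMat_cons_one_zero,
    contMat_cons_one_one, contMat_nil, one_apply_eq, one_apply_ne, ne_eq, zero_ne_one, one_ne_zero,
    not_false_eq_true]
  ring

lemma contMat_fold_six_mul_sq (d : ℕ) (v : List ℕ) :
    contMat (v.reverse ++ [d + 1, 5, 1, d] ++ v) 0 0 = 6 * contMat ((d + 1) :: v) 0 0 ^ 2 := by
  rw [contMat_reverse_append_append_zero_zero, contMat_cons_zero_zero]
  simp only [contMat_cons_zero_zero, contMat_cons_zero_one, contMat_cons_one_zero,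
    contMat_cons_one_one, contMat_nil, one_apply_eq, one_apply_ne, ne_eq, zero_ne_one, one_ne_zero,
    not_false_eq_true]
  ring

lemma contMat_zero_zero_pos {l : List ℕ} (hl : ∀ x ∈ l, 0 < x) : 0 < contMat l 0 0 := by
  induction l with
  | nil => simp
  | cons a l ih =>
    simp only [List.forall_mem_cons] at hl
    rw [contMat_cons_zero_zero]
    have := Nat.mul_pos hl.1 (ih hl.2)
    omega

lemma contMat_cons_one_zero_lt {d : ℕ} {l : List ℕ} (hd : 2 ≤ d) (hl : ∀ x ∈ l, 0 < x) :
    contMat (d :: l) 1 0 < contMat (d :: l) 0 0 := by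
  rw [contMat_cons_zero_zero, contMat_cons_one_zero]
  nlinarith [contMat_zero_zero_pos hl]

lemma coprime_contMat (l : List ℕ) : Nat.Coprime (contMat l 1 0) (contMat l 0 0) := by
  induction l with
  | nil => simp
  | cons a l ih =>
    rw [contMat_cons_zero_zero, contMat_cons_one_zero, Nat.coprime_mul_right_add_right]
    exact ih.symm

lemma cfVal_eq_contMat {l : List ℕ} (hl : ∀ x ∈ l, 0 < x) :
    cfVal l = (contMat l 1 0 : ℚ) / contMat l 0 0 := by
  induction l with
  | nil => simp [cfVal]
  | cons a l ih =>
    simp only [List.forall_mem_cons] at hl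
    have hq : (contMat l 0 0 : ℚ) ≠ 0 := by exact_mod_cast (contMat_zero_zero_pos hl.2).ne'
    rw [cfVal, ih hl.2, contMat_cons_zero_zero, contMat_cons_one_zero]
    field_simp
    push_cast
    ring

/-- In the folding step the first digit `c + 1` is replaced by `c, c + 2` or `c + 1, 5, 1, c`,
and the last digit becomes both end digits of the new word; hence both lie in `[2, 4]`. -/
def HasZarembaWord (N : ℕ) : Prop :=
  ∃ d e : ℕ, ∃ u : List ℕ, d ∈ Set.Icc 2 4 ∧ e ∈ Set.Icc 2 4 ∧ (∀ x ∈ u, x ∈ Set.Icc 1 5) ∧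
    contMat (d :: (u ++ [e])) 0 0 = N

lemma HasZarembaWord.fold {N : ℕ} (h : HasZarembaWord N) (mid : ℕ → List ℕ) (k : ℕ)
    (hmid : ∀ c ∈ Set.Icc 1 3, ∀ x ∈ mid c, x ∈ Set.Icc 1 5)
    (hfold : ∀ c v, contMat (v.reverse ++ mid c ++ v) 0 0 = k * contMat ((c + 1) :: v) 0 0 ^ 2) :
    HasZarembaWord (k * N ^ 2) := by
  obtain ⟨d, e, u, hd, he, hu, rfl⟩ := h
  obtain ⟨c, rfl⟩ : ∃ c, d = c + 1 := ⟨d - 1, by grind⟩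
  refine ⟨e, e, u.reverse ++ mid c ++ u, he, he, ?_, ?_⟩
  · have := hmid c ⟨by grind, by grind⟩
    grind
  · rw [← hfold c (u ++ [e])]
    simp

lemma HasZarembaWord.sq {N : ℕ} (h : HasZarembaWord N) : HasZarembaWord (N ^ 2) := by
  simpa only [one_mul] using h.fold (fun c => [c, c + 2]) 1 (by grind)
    (by simpa only [one_mul] using contMat_fold_sq)

lemma HasZarembaWord.six_mul_sq {N : ℕ} (h : HasZarembaWord N) : HasZarembaWord (6 * N ^ 2) :=
  h.fold (fun c => [c + 1, 5, 1, c]) 6 (by grind) contMat_fold_six_mul_sq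

lemma hasZarembaWord_six_pow {n : ℕ} (hn : 2 ≤ n) : HasZarembaWord (6 ^ n) := by
  induction n using Nat.strong_induction_on with
  | _ n ih =>
    obtain hn4 | hn4 : n < 4 ∨ 4 ≤ n := by omega
    · interval_cases n
      · exact ⟨3, 2, [3, 1], by norm_num, by norm_num, by norm_num, by decide⟩
      · exact ⟨4, 2, [2, 2, 4], by norm_num, by norm_num, by norm_num, by decide⟩
    · obtain ⟨k, rfl | rfl⟩ := Nat.even_or_odd' n
      · rw [pow_mul']
        exact (ih k (by omega) (by omega)).sq
      · rw [pow_succ', pow_mul']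
        exact (ih k (by omega) (by omega)).six_mul_sq

/-- Zaremba's conjecture with constant `5` for `q = 6^n`, `n ≥ 1`. -/
theorem zaremba_six_pow (n : ℕ) (hn : 0 < n) :
    ∃ a : ℕ, 1 ≤ a ∧ a < 6 ^ n ∧ Nat.gcd a (6 ^ n) = 1 ∧
      ∃ L : List ℕ, (a : ℚ) / (6 ^ n) = cfVal L ∧
        ∀ x ∈ L, 0 < x ∧ x ≤ 5 := by
  obtain ⟨d, l, hd, hl, hK⟩ : ∃ d l, 2 ≤ d ∧ (∀ x ∈ d :: l, 0 < x ∧ x ≤ 5) ∧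
      contMat (d :: l) 0 0 = 6 ^ n := by
    obtain rfl | hn2 : n = 1 ∨ 2 ≤ n := by omega
    · exact ⟨5, [1], by norm_num, by decide, by decide⟩
    · obtain ⟨d, e, u, hd, he, hu, hK⟩ := hasZarembaWord_six_pow hn2
      exact ⟨d, u ++ [e], hd.1, by grind, hK⟩
  have hpos : ∀ x ∈ l, 0 < x := fun x hx => (hl x (List.mem_cons_of_mem d hx)).1
  refine ⟨contMat (d :: l) 1 0, ?_, hK ▸ contMat_cons_one_zero_lt hd hpos, hK ▸ coprime_contMat _,
    d :: l, ?_, hl⟩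
  · rw [contMat_cons_one_zero]
    exact contMat_zero_zero_pos hpos
  · rw [cfVal_eq_contMat fun x hx => (hl x hx).1, hK]
    push_cast
    rfl
end

section
/- For every positive integer n, setting q = 5^n, there exists an integer a with 1 ≤ a < q and gcd(a, q) = 1 such that a/q has a finite simple continued fraction expansion a/q = [a_1, …, a_r] (each a_i a positive integer) with a_i ≤ 4 for all i. -/
namespace ZarembaFive

open Matrix

/-- The standard continued-fraction matrix `[[a,1],[1,0]]`. -/
def m (a : ℕ) : Matrix (Fin 2) (Fin 2) ℕ := !![a, 1; 1, 0]

/-- Product of the continued-fraction matrices of a word. -/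
def P (L : List ℕ) : Matrix (Fin 2) (Fin 2) ℕ := (L.map m).prod

lemma P_nil : P [] = 1 := rfl

lemma P_cons (a : ℕ) (L : List ℕ) : P (a :: L) = m a * P L := by
  simp [P]

lemma P_append (L L' : List ℕ) : P (L ++ L') = P L * P L' := by
  simp [P]

lemma m_transpose (a : ℕ) : (m a)ᵀ = m a := by
  ext i j
  fin_cases i <;> fin_cases j <;> simp [m]

lemma P_reverse (L : List ℕ) : P L.reverse = (P L)ᵀ := by
  induction L with
  | nil => simp [P_nil]
  | cons a l ih =>
      rw [List.reverse_cons, P_append, ih, show P (a :: l) = m a * P l from P_cons a l,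
        Matrix.transpose_mul, m_transpose]
      congr 1
      simp [P]

lemma m_apply00 (a : ℕ) : m a 0 0 = a := by simp [m]
lemma m_apply01 (a : ℕ) : m a 0 1 = 1 := by simp [m]
lemma m_apply10 (a : ℕ) : m a 1 0 = 1 := by simp [m]
lemma m_apply11 (a : ℕ) : m a 1 1 = 0 := by simp [m]

lemma P_nil00 : P [] 0 0 = 1 := rfl
lemma P_nil10 : P [] 1 0 = 0 := rfl

lemma P_cons00 (a : ℕ) (L : List ℕ) :
    P (a :: L) 0 0 = a * P L 0 0 + P L 1 0 := by
  rw [P_cons]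
  simp [Matrix.mul_apply, Fin.sum_univ_two, m_apply00, m_apply01]

lemma P_cons10 (a : ℕ) (L : List ℕ) :
    P (a :: L) 1 0 = P L 0 0 := by
  rw [P_cons]
  simp [Matrix.mul_apply, Fin.sum_univ_two, m_apply10, m_apply11]

lemma P00_pos (L : List ℕ) (h : ∀ x ∈ L, 0 < x) : 0 < P L 0 0 := by
  induction L with
  | nil => simp [P_nil00]
  | cons a l ih =>
      have ha : 0 < a := h a (by simp)
      have hl : 0 < P l 0 0 := ih (fun x hx => h x (by simp [hx]))
      rw [P_cons00]
      have : 0 < a * P l 0 0 := Nat.mul_pos ha hl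
      omega

lemma coprimeP (L : List ℕ) : Nat.gcd (P L 1 0) (P L 0 0) = 1 := by
  induction L with
  | nil => simp [P_nil00, P_nil10]
  | cons a l ih =>
      rw [P_cons00, P_cons10]
      have h1 : a * P l 0 0 + P l 1 0 = P l 1 0 + a * P l 0 0 := by ring
      rw [h1, Nat.gcd_add_mul_right_right]
      rw [Nat.gcd_comm]
      exact ih

lemma cfVal_P (L : List ℕ) (h : ∀ x ∈ L, 0 < x) :
    cfVal L = (P L 1 0 : ℚ) / (P L 0 0) := by
  induction L with
  | nil => simp [cfVal, P_nil00, P_nil10]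
  | cons a l ih =>
      have ha : 0 < a := h a (by simp)
      have hl : ∀ x ∈ l, 0 < x := fun x hx => h x (by simp [hx])
      have hk : 0 < P l 0 0 := P00_pos l hl
      have hkQ : (0:ℚ) < (P l 0 0 : ℚ) := by exact_mod_cast hk
      have ht : (0:ℚ) ≤ (P l 1 0 : ℚ) := by positivity
      have haQ : (1:ℚ) ≤ (a:ℚ) := by exact_mod_cast ha
      have hne : (a:ℚ) * (P l 0 0 : ℚ) + (P l 1 0 : ℚ) > 0 := by nlinarith
      rw [show cfVal (a :: l) = 1 / (a + cfVal l) from rfl, ih hl,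
        P_cons00, P_cons10]
      push_cast
      rw [div_eq_div_iff (by positivity) (by nlinarith)]
      field_simp

/-- Doubling identity. -/
lemma idD (X : Matrix (Fin 2) (Fin 2) ℕ) :
    (m 2 * (X * (m 3 * (m 1 * (Xᵀ * m 2))))) 0 0
      = ((m 2 * (X * m 2)) 0 0) ^ 2 := by
  simp only [Matrix.mul_apply, Fin.sum_univ_two, Matrix.transpose_apply,
    m_apply00, m_apply01, m_apply10, m_apply11]
  ring

/-- Doubling-plus-one identity. -/
lemma idT (X : Matrix (Fin 2) (Fin 2) ℕ) :
    (m 2 * (X * (m 2 * (m 4 * (m 1 * (m 1 * (Xᵀ * m 2))))))) 0 0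
      = 5 * ((m 2 * (X * m 2)) 0 0) ^ 2 := by
  simp only [Matrix.mul_apply, Fin.sum_univ_two, Matrix.transpose_apply,
    m_apply00, m_apply01, m_apply10, m_apply11]
  ring

lemma P_word (B : List ℕ) :
    P (2 :: (B ++ [2])) = m 2 * (P B * m 2) := by
  rw [P_cons, P_append]
  simp [P, mul_one]

lemma P_wordD (B : List ℕ) :
    P (2 :: ((B ++ ([3, 1] ++ B.reverse)) ++ [2]))
      = m 2 * (P B * (m 3 * (m 1 * ((P B)ᵀ * m 2)))) := by
  rw [List.append_assoc, List.append_assoc]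
  rw [P_cons, P_append, P_append, P_append, P_reverse]
  simp [P, P_cons, mul_one, mul_assoc]

lemma P_wordT (B : List ℕ) :
    P (2 :: ((B ++ ([2, 4, 1, 1] ++ B.reverse)) ++ [2]))
      = m 2 * (P B * (m 2 * (m 4 * (m 1 * (m 1 * ((P B)ᵀ * m 2)))))) := by
  rw [List.append_assoc, List.append_assoc]
  rw [P_cons, P_append, P_append, P_append, P_reverse]
  simp [P, P_cons, mul_one, mul_assoc]

/-- Main construction: for each `n ≥ 1` there is a word `2 :: B ++ [2]` with
entries in `[1,4]` whose continuant is `5 ^ n`. -/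
lemma exists_word : ∀ N n : ℕ, n ≤ N → 0 < n →
    ∃ B : List ℕ, (∀ x ∈ B, 0 < x ∧ x ≤ 4) ∧
      P (2 :: (B ++ [2])) 0 0 = 5 ^ n := by
  intro N
  induction N with
  | zero => intro n h h0; omega
  | succ N ih =>
      intro n hn h0
      rcases Nat.lt_or_ge n (N + 1) with hlt | hge
      · exact ih n (by omega) h0
      have hnN : n = N + 1 := by omega
      rcases Nat.lt_or_ge n 2 with h1 | h2
      · -- n = 1
        have : n = 1 := by omega
        subst this
        refine ⟨[], by simp, ?_⟩
        rw [P_word]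
        simp [Matrix.mul_apply, Fin.sum_univ_two, m_apply00, m_apply01,
          m_apply10, m_apply11, P_nil]
      · -- n ≥ 2 : split by parity
        set r := n / 2 with hr
        have hrn : n = 2 * r ∨ n = 2 * r + 1 := by omega
        have hr1 : 0 < r := by omega
        have hrN : r ≤ N := by omega
        obtain ⟨B, hB, hK⟩ := ih r hrN hr1
        have hKm : (m 2 * (P B * m 2)) 0 0 = 5 ^ r := by
          rw [← P_word]; exact hK
        rcases hrn with he | ho
        · refine ⟨B ++ ([3, 1] ++ B.reverse), ?_, ?_⟩
          · intro x hx
            rcases List.mem_append.1 hx with h | h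
            · exact hB x h
            rcases List.mem_append.1 h with h | h
            · fin_cases h <;> omega
            · exact hB x (List.mem_reverse.1 h)
          · rw [P_wordD, idD, hKm, ← pow_mul]
            have hrn2 : r * 2 = n := by omega
            rw [hrn2]
        · refine ⟨B ++ ([2, 4, 1, 1] ++ B.reverse), ?_, ?_⟩
          · intro x hx
            rcases List.mem_append.1 hx with h | h
            · exact hB x h
            rcases List.mem_append.1 h with h | h
            · fin_cases h <;> omega
            · exact hB x (List.mem_reverse.1 h)
          · rw [P_wordT, idT, hKm, ← pow_mul]
            have hrn2 : n = r * 2 + 1 := by omega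
            rw [hrn2, pow_succ]
            ring

end ZarembaFive

open ZarembaFive in
/-- Zaremba's conjecture with constant `4` for `q = 5^n`, `n ≥ 1`. -/
theorem zaremba_five_pow (n : ℕ) (hn : 0 < n) :
    ∃ a : ℕ, 1 ≤ a ∧ a < 5 ^ n ∧ Nat.gcd a (5 ^ n) = 1 ∧
      ∃ L : List ℕ, (a : ℚ) / (5 ^ n) = cfVal L ∧
        ∀ x ∈ L, 0 < x ∧ x ≤ 4 := by
  obtain ⟨B, hB, hK⟩ := exists_word n n le_rfl hn
  set W : List ℕ := 2 :: (B ++ [2]) with hW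
  have hWbd : ∀ x ∈ W, 0 < x ∧ x ≤ 4 := by
    intro x hx
    rw [hW] at hx
    rcases List.mem_cons.1 hx with h | h
    · omega
    rcases List.mem_append.1 h with h | h
    · exact hB x h
    · have hx2 : x = 2 := by simpa using h
      omega
  have hWpos : ∀ x ∈ W, 0 < x := fun x hx => (hWbd x hx).1
  have hBpos : ∀ x ∈ B ++ [2], 0 < x := by
    intro x hx
    rcases List.mem_append.1 hx with h | h
    · exact (hB x h).1
    · have hx2 : x = 2 := by simpa using h
      omega
  have hk : 0 < P (B ++ [2]) 0 0 := P00_pos _ hBpos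
  refine ⟨P W 1 0, ?_, ?_, ?_, W, ?_, hWbd⟩
  · rw [hW, P_cons10]; omega
  · rw [← hK, hW, P_cons10, P_cons00]
    have := Nat.zero_le (P (B ++ [2]) 1 0)
    omega
  · rw [← hK]
    exact coprimeP W
  · rw [cfVal_P W hWpos, hK]
    push_cast
    ring
end

section
/- For every integer q ≥ 2 with Euler totient φ(q) ≥ 4, there exists an integer a with 1 ≤ a ≤ q − 1 and gcd(a, q) = 1 such that a/q has a finite simple continued fraction expansion a/q = [a_1, …, a_n] (each a_i a positive integer) satisfying: n ≥ 2, a_1 ≥ 2, a_n ≥ 2, and a_i ≤ (q − 1)/2 for all i. -/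
lemma q_ge_five (q : ℕ) (hphi : 4 ≤ Nat.totient q) : 5 ≤ q := by
  by_contra h
  interval_cases q <;> revert hphi <;> decide

lemma q_ne_six (q : ℕ) (hphi : 4 ≤ Nat.totient q) : q ≠ 6 := by
  rintro rfl; revert hphi; decide

/-- For `q ≥ 2` with `φ(q) ≥ 4`, there is `1 ≤ a ≤ q - 1` coprime to `q` whose
continued fraction `[a₁, …, aₙ]` has `n ≥ 2`, `a₁ ≥ 2`, `aₙ ≥ 2`, and all
partial quotients at most `(q - 1)/2`. -/
theorem exists_cf_with_good_endpoints (q : ℕ) (hq : 2 ≤ q) (hphi : 4 ≤ Nat.totient q) :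
    ∃ a : ℕ, 1 ≤ a ∧ a ≤ q - 1 ∧ Nat.gcd a q = 1 ∧
      ∃ L : List ℕ, (a : ℚ) / q = cfVal L ∧ 2 ≤ L.length ∧
        2 ≤ L.headI ∧ 2 ≤ L.getLastD 0 ∧
        ∀ x ∈ L, 0 < x ∧ (x : ℚ) ≤ ((q : ℚ) - 1) / 2 := by
  have hq5 : 5 ≤ q := q_ge_five q hphi
  have hq6 : q ≠ 6 := q_ne_six q hphi
  by_cases hodd : q % 2 = 1
  · -- q odd: q = 2e+1, use [2, e]
    obtain ⟨e, he, rfl⟩ : ∃ e, 2 ≤ e ∧ q = 2 * e + 1 := ⟨q / 2, by omega, by omega⟩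
    have he0 : (0:ℚ) < (e : ℚ) := by exact_mod_cast Nat.lt_of_lt_of_le two_pos he
    have heq : (2:ℚ) ≤ (e : ℚ) := by exact_mod_cast he
    refine ⟨e, by omega, by omega, ?_, [2, e], ?_, by simp, by simp, by simpa using he, ?_⟩
    · rw [show 2 * e + 1 = 1 + e * 2 by ring, Nat.gcd_add_mul_left_right]; simp
    · simp only [cfVal]
      push_cast
      rw [div_eq_div_iff (by positivity) (by positivity)]
      field_simp
      try ring
    · intro x hx
      simp only [List.mem_cons, List.mem_singleton, List.not_mem_nil, or_false] at hx
      rcases hx with rfl | rfl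
      · refine ⟨by norm_num, ?_⟩; push_cast; linarith
      · refine ⟨by omega, ?_⟩; push_cast; linarith
  · by_cases h4 : q % 4 = 0
    · -- q = 4b+4, b ≥ 1, use [2, b, 2], a = 2b+1
      obtain ⟨b, hb, rfl⟩ : ∃ b, 1 ≤ b ∧ q = 4 * b + 4 := ⟨q / 4 - 1, by omega, by omega⟩
      have hb0 : (1:ℚ) ≤ (b : ℚ) := by exact_mod_cast hb
      refine ⟨2 * b + 1, by omega, by omega, ?_, [2, b, 2], ?_, by simp, by simp, by simp, ?_⟩
      · have c2 : Nat.Coprime (2 * b + 1) 2 :=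
          Nat.coprime_two_right.mpr (Nat.odd_iff.mpr (by omega))
        rw [show 4 * b + 4 = 2 + (2 * b + 1) * 2 by ring, Nat.gcd_add_mul_left_right]
        exact c2
      · simp only [cfVal]
        push_cast
        rw [div_eq_div_iff (by positivity) (by positivity)]
        field_simp
        try ring
      · intro x hx
        simp only [List.mem_cons, List.not_mem_nil, or_false] at hx
        rcases hx with rfl | rfl | rfl
        · refine ⟨by norm_num, ?_⟩; push_cast; linarith
        · refine ⟨by omega, ?_⟩; push_cast; linarith
        · refine ⟨by norm_num, ?_⟩; push_cast; linarith
    · by_cases h8 : q % 8 = 6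
      · -- q = 8b+6, b ≥ 1, use [2, b, 4], a = 4b+1
        obtain ⟨b, hb, rfl⟩ : ∃ b, 1 ≤ b ∧ q = 8 * b + 6 := ⟨q / 8, by omega, by omega⟩
        have hb0 : (1:ℚ) ≤ (b : ℚ) := by exact_mod_cast hb
        refine ⟨4 * b + 1, by omega, by omega, ?_, [2, b, 4], ?_, by simp, by simp, by simp, ?_⟩
        · have c2 : Nat.Coprime (4 * b + 1) 2 :=
            Nat.coprime_two_right.mpr (Nat.odd_iff.mpr (by omega))
          have c4 : Nat.Coprime (4 * b + 1) 4 := by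
            rw [show (4:ℕ) = 2 * 2 from rfl]; exact c2.mul_right c2
          rw [show 8 * b + 6 = 4 + (4 * b + 1) * 2 by ring, Nat.gcd_add_mul_left_right]
          exact c4
        · simp only [cfVal]
          push_cast
          rw [div_eq_div_iff (by positivity) (by positivity)]
          field_simp
          try ring
        · intro x hx
          simp only [List.mem_cons, List.not_mem_nil, or_false] at hx
          rcases hx with rfl | rfl | rfl
          · refine ⟨by norm_num, ?_⟩; push_cast; linarith
          · refine ⟨by omega, ?_⟩; push_cast; linarith
          · refine ⟨by norm_num, ?_⟩; push_cast; linarith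
      · -- q ≡ 2 mod 8
        by_cases h10 : q = 10
        · subst h10
          refine ⟨3, by norm_num, by norm_num, by norm_num, [3, 3], ?_, by simp, by simp,
            by simp, ?_⟩
          · simp only [cfVal]; norm_num
          · intro x hx
            simp only [List.mem_cons, List.not_mem_nil, or_false] at hx
            rcases hx with rfl | rfl <;> norm_num
        · -- q = 8b+10, b ≥ 1, use [2, b, 1, 3], a = 4b+3
          obtain ⟨b, hb, rfl⟩ : ∃ b, 1 ≤ b ∧ q = 8 * b + 10 := ⟨q / 8 - 1, by omega, by omega⟩
          have hb0 : (1:ℚ) ≤ (b : ℚ) := by exact_mod_cast hb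
          refine ⟨4 * b + 3, by omega, by omega, ?_, [2, b, 1, 3], ?_, by simp, by simp,
            by simp, ?_⟩
          · have c2 : Nat.Coprime (4 * b + 3) 2 :=
              Nat.coprime_two_right.mpr (Nat.odd_iff.mpr (by omega))
            have c4 : Nat.Coprime (4 * b + 3) 4 := by
              rw [show (4:ℕ) = 2 * 2 from rfl]; exact c2.mul_right c2
            rw [show 8 * b + 10 = 4 + (4 * b + 3) * 2 by ring, Nat.gcd_add_mul_left_right]
            exact c4
          · simp only [cfVal]
            push_cast
            rw [div_eq_div_iff (by positivity) (by positivity)]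
            field_simp
            ring
          · intro x hx
            simp only [List.mem_cons, List.not_mem_nil, or_false] at hx
            rcases hx with rfl | rfl | rfl | rfl
            · refine ⟨by norm_num, ?_⟩; push_cast; linarith
            · refine ⟨by omega, ?_⟩; push_cast; linarith
            · refine ⟨by norm_num, ?_⟩; push_cast; linarith
            · refine ⟨by norm_num, ?_⟩; push_cast; linarith
end

section
/- (Folding Lemma) Let a_1, …, a_r be positive integers with a_r ≥ 2, let t/q = [a_1, …, a_r] = 1/(a_1 + 1/(a_2 + ⋯ + 1/a_r)) be the value of this continued fraction written in lowest terms, and let b ≥ 2 be an integer. Then t/q + (−1)^r/(b·q^2) equals the value of the continued fraction [a_1, …, a_r, b − 1, 1, a_r − 1, a_{r−1}, …, a_1]. -/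
open Matrix

def cfMat : List ℕ → Matrix (Fin 2) (Fin 2) ℤ
  | [] => 1
  | a :: l => !![0, 1; 1, (a : ℤ)] * cfMat l

@[simp]
lemma cfMat_nil : cfMat [] = 1 := rfl

@[simp]
lemma cfMat_cons (a : ℕ) (l : List ℕ) : cfMat (a :: l) = !![0, 1; 1, (a : ℤ)] * cfMat l := rfl

lemma cfMat_append (L₁ L₂ : List ℕ) : cfMat (L₁ ++ L₂) = cfMat L₁ * cfMat L₂ := by
  induction L₁ with
  | nil => simp
  | cons a l ih => simp [ih]

lemma cfMat_reverse (L : List ℕ) : cfMat L.reverse = (cfMat L)ᵀ := by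
  induction L with
  | nil => simp
  | cons a l ih =>
    have hsymm : (!![0, 1; 1, (a : ℤ)])ᵀ = !![0, 1; 1, (a : ℤ)] := by
      ext i j; fin_cases i <;> fin_cases j <;> rfl
    rw [List.reverse_cons, cfMat_append, ih, cfMat_cons a l, transpose_mul, hsymm]
    simp

lemma det_cfMat (L : List ℕ) : (cfMat L).det = (-1) ^ L.length := by
  induction L with
  | nil => simp
  | cons a l ih =>
    rw [cfMat_cons, det_mul, ih, det_fin_two_of, List.length_cons, pow_succ]
    ring

lemma cfMat_cons_zero_one (a : ℕ) (l : List ℕ) : cfMat (a :: l) 0 1 = cfMat l 1 1 := by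
  simp [mul_apply, Fin.sum_univ_two]

lemma cfMat_cons_one_one (a : ℕ) (l : List ℕ) :
    cfMat (a :: l) 1 1 = cfMat l 0 1 + a * cfMat l 1 1 := by
  simp [mul_apply, Fin.sum_univ_two]

lemma cfMat_zero_one_nonneg_and_one_one_pos (L : List ℕ) (hL : ∀ x ∈ L, 0 < x) :
    0 ≤ cfMat L 0 1 ∧ 0 < cfMat L 1 1 := by
  induction L with
  | nil => simp
  | cons a l ih =>
    obtain ⟨hB, hD⟩ := ih fun x hx => hL x (List.mem_cons_of_mem a hx)
    have ha : (1 : ℤ) ≤ a := by exact_mod_cast hL a List.mem_cons_self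
    rw [cfMat_cons_zero_one, cfMat_cons_one_one]
    exact ⟨hD.le, by nlinarith⟩

lemma cfVal_eq_div (L : List ℕ) (hL : ∀ x ∈ L, 0 < x) :
    cfVal L = (cfMat L 0 1 : ℚ) / (cfMat L 1 1 : ℚ) := by
  induction L with
  | nil => simp [cfVal]
  | cons a l ih =>
    have hl : ∀ x ∈ l, 0 < x := fun x hx => hL x (List.mem_cons_of_mem a hx)
    have hD : (cfMat l 1 1 : ℚ) ≠ 0 := by
      exact_mod_cast (cfMat_zero_one_nonneg_and_one_one_pos l hl).2.ne'
    rw [cfVal, ih hl, cfMat_cons_zero_one, cfMat_cons_one_one]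
    push_cast
    rw [add_div' _ _ _ hD, one_div_div, add_comm]

lemma Matrix.isCoprime_zero_one_one_one_of_isUnit_det {R : Type*} [CommRing R]
    (A : Matrix (Fin 2) (Fin 2) R) (h : IsUnit A.det) : IsCoprime (A 0 1) (A 1 1) := by
  obtain ⟨v, hv⟩ := h.exists_left_inv
  rw [det_fin_two] at hv
  exact ⟨-v * A 1 0, v * A 0 0, by linear_combination hv⟩

lemma den_cfVal (L : List ℕ) (hL : ∀ x ∈ L, 0 < x) : ((cfVal L).den : ℤ) = cfMat L 1 1 := by
  have hcop : IsCoprime (cfMat L 0 1) (cfMat L 1 1) :=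
    (cfMat L).isCoprime_zero_one_one_one_of_isUnit_det
      (by rw [det_cfMat]; exact isUnit_neg_one.pow _)
  rw [cfVal_eq_div L hL]
  exact Rat.den_div_eq_of_coprime (cfMat_zero_one_nonneg_and_one_one_pos L hL).2
    (Int.isCoprime_iff_gcd_eq_one.mp hcop)

lemma cfMat_fold (M : List ℕ) (a b : ℕ) (ha : 1 ≤ a) (hb : 1 ≤ b) :
    cfMat (M ++ [a, b - 1, 1, a - 1] ++ M.reverse) =
      cfMat (M ++ [a]) * !![0, 1; -1, (b : ℤ)] * (cfMat (M ++ [a]))ᵀ := by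
  have hmiddle : cfMat [a, b - 1, 1, a - 1] = cfMat [a] * !![0, 1; -1, (b : ℤ)] * cfMat [a] := by
    simp only [cfMat_cons, cfMat_nil, Matrix.mul_one, Nat.cast_sub ha, Nat.cast_sub hb]
    ext i j
    fin_cases i <;> fin_cases j <;> simp [mul_apply, Fin.sum_univ_two] <;> ring
  rw [← cfMat_reverse, List.reverse_append, List.reverse_singleton, cfMat_append, cfMat_append,
    cfMat_append, cfMat_append, hmiddle]
  simp only [Matrix.mul_assoc]

lemma Matrix.mul_fin_two_mul_transpose_zero_one {R : Type*} [CommRing R]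
    (Y : Matrix (Fin 2) (Fin 2) R) (b : R) :
    (Y * !![0, 1; -1, b] * Yᵀ) 0 1 = b * Y 0 1 * Y 1 1 + Y.det := by
  simp [mul_apply, Fin.sum_univ_two, det_fin_two]
  ring

lemma Matrix.mul_fin_two_mul_transpose_one_one {R : Type*} [CommRing R]
    (Y : Matrix (Fin 2) (Fin 2) R) (b : R) :
    (Y * !![0, 1; -1, b] * Yᵀ) 1 1 = b * Y 1 1 ^ 2 := by
  simp [mul_apply, Fin.sum_univ_two]
  ring

/-- **Folding Lemma.** If `t/q = [a₁, …, aᵣ]` in lowest terms (here the list is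
`M ++ [a]` with `a = aᵣ ≥ 2`, so `r = M.length + 1`, `t/q = cfVal (M ++ [a])` and
`q` is its denominator) and `b ≥ 2`, then
`t/q + (-1)^r/(b q²) = [a₁, …, aᵣ, b - 1, 1, aᵣ - 1, aᵣ₋₁, …, a₁]`. -/
theorem folding_lemma (M : List ℕ) (a b : ℕ) (hM : ∀ x ∈ M, 0 < x)
    (ha : 2 ≤ a) (hb : 2 ≤ b) :
    cfVal (M ++ [a]) + (-1) ^ (M.length + 1) / ((b : ℚ) * ((cfVal (M ++ [a])).den : ℚ) ^ 2) =
      cfVal (M ++ [a, b - 1, 1, a - 1] ++ M.reverse) := by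
  have hpos : ∀ x ∈ M ++ [a], 0 < x := by
    simp only [List.mem_append, List.mem_singleton]
    rintro x (hx | rfl) <;> [exact hM x hx; omega]
  have hfold_pos : ∀ x ∈ M ++ [a, b - 1, 1, a - 1] ++ M.reverse, 0 < x := by
    simp only [List.mem_append, List.mem_cons, List.mem_reverse, List.not_mem_nil, or_false]
    rintro x ((hx | rfl | rfl | rfl | rfl) | hx) <;> first | exact hM x hx | omega
  have hden : ((cfVal (M ++ [a])).den : ℚ) = (cfMat (M ++ [a]) 1 1 : ℚ) := by
    exact_mod_cast den_cfVal _ hpos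
  have hq : (cfMat (M ++ [a]) 1 1 : ℚ) ≠ 0 := by
    exact_mod_cast (cfMat_zero_one_nonneg_and_one_one_pos _ hpos).2.ne'
  have hb0 : (b : ℚ) ≠ 0 := by positivity
  rw [cfVal_eq_div _ hfold_pos, cfMat_fold M a b (by omega) (by omega),
    mul_fin_two_mul_transpose_zero_one, mul_fin_two_mul_transpose_one_one,
    det_cfMat, hden, cfVal_eq_div _ hpos]
  push_cast
  simp only [List.length_append, List.length_singleton]
  field_simp
end

section
/- Let a_1, …, a_r be positive integers with a_r ≥ 2 and let b ≥ 2 be an integer. If q is the denominator of the fraction [a_1, …, a_r] = 1/(a_1 + 1/(⋯ + 1/a_r)) in lowest terms, then the denominator of the fraction given by the continued fraction [a_1, …, a_r, b − 1, 1, a_r − 1, a_{r−1}, …, a_1], written in lowest terms, equals b·q^2. -/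
open Matrix

def continuantMatrix (l : List ℕ) : Matrix (Fin 2) (Fin 2) ℕ :=
  (l.map fun c => !![c, 1; 1, 0]).prod

@[simp]
theorem continuantMatrix_nil : continuantMatrix [] = 1 := rfl

theorem continuantMatrix_cons (c : ℕ) (l : List ℕ) :
    continuantMatrix (c :: l) = !![c, 1; 1, 0] * continuantMatrix l := rfl

theorem continuantMatrix_append (l m : List ℕ) :
    continuantMatrix (l ++ m) = continuantMatrix l * continuantMatrix m := by
  simp [continuantMatrix]

theorem continuantMatrix_reverse (l : List ℕ) :
    continuantMatrix l.reverse = (continuantMatrix l)ᵀ := by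
  have hsymm (c : ℕ) : !![c, 1; 1, 0]ᵀ = !![c, 1; 1, 0] := by
    ext i j; fin_cases i <;> fin_cases j <;> rfl
  simp [continuantMatrix, transpose_list_prod, Function.comp_def, hsymm]

theorem continuantMatrix_cons_zero_zero (c : ℕ) (l : List ℕ) :
    continuantMatrix (c :: l) 0 0 = c * continuantMatrix l 0 0 + continuantMatrix l 1 0 := by
  simp [continuantMatrix_cons, mul_apply, Fin.sum_univ_two]

theorem continuantMatrix_cons_one_zero (c : ℕ) (l : List ℕ) :
    continuantMatrix (c :: l) 1 0 = continuantMatrix l 0 0 := by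
  simp [continuantMatrix_cons, mul_apply, Fin.sum_univ_two]

theorem coprime_continuantMatrix (l : List ℕ) :
    (continuantMatrix l 1 0).Coprime (continuantMatrix l 0 0) := by
  induction l with
  | nil => simp
  | cons c l ih =>
    rw [continuantMatrix_cons_zero_zero, continuantMatrix_cons_one_zero, add_comm]
    exact (Nat.coprime_add_mul_right_right _ _ _).mpr ih.symm

theorem continuantMatrix_zero_zero_pos {l : List ℕ} (hl : ∀ x ∈ l, 0 < x) :
    0 < continuantMatrix l 0 0 := by
  induction l with
  | nil => simp
  | cons c l ih =>
    obtain ⟨hc, hl⟩ := List.forall_mem_cons.mp hl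
    have := ih hl
    rw [continuantMatrix_cons_zero_zero]
    positivity

theorem cfVal_eq_div_s9 {l : List ℕ} (hl : ∀ x ∈ l, 0 < x) :
    cfVal l = (continuantMatrix l 1 0 : ℚ) / continuantMatrix l 0 0 := by
  induction l with
  | nil => simp [cfVal]
  | cons c l ih =>
    obtain ⟨hc, hl⟩ := List.forall_mem_cons.mp hl
    have hq : (continuantMatrix l 0 0 : ℚ) ≠ 0 := by
      exact_mod_cast (continuantMatrix_zero_zero_pos hl).ne'
    have hd : (c : ℚ) * continuantMatrix l 0 0 + continuantMatrix l 1 0 ≠ 0 := by positivity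
    rw [cfVal, ih hl, continuantMatrix_cons_zero_zero, continuantMatrix_cons_one_zero]
    push_cast
    field_simp

theorem den_cfVal_s9 {l : List ℕ} (hl : ∀ x ∈ l, 0 < x) :
    (cfVal l).den = continuantMatrix l 0 0 := by
  have h := Rat.den_div_eq_of_coprime (a := continuantMatrix l 1 0)
    (b := continuantMatrix l 0 0) (by exact_mod_cast continuantMatrix_zero_zero_pos hl)
    (by simpa using coprime_continuantMatrix l)
  rw [Int.cast_natCast, Int.cast_natCast] at h
  rw [cfVal_eq_div_s9 hl]
  exact_mod_cast h

theorem continuantMatrix_fold_middle {a b : ℕ} (ha : 1 ≤ a) (hb : 1 ≤ b) :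
    continuantMatrix [a, b - 1, 1, a - 1] = !![a ^ 2 * b, a * b + 1; a * b - 1, b] := by
  have hab : 1 ≤ a * b := Nat.one_le_iff_ne_zero.mpr (by positivity)
  simp only [continuantMatrix, List.map_cons, List.map_nil, List.prod_cons, List.prod_nil, mul_one,
    mul_fin_two, EmbeddingLike.apply_eq_iff_eq, vecCons_inj, and_true]
  refine ⟨⟨?_, ?_⟩, ?_, ?_⟩ <;> zify [ha, hb, hab] <;> ring

theorem continuantMatrix_fold_zero_zero (l : List ℕ) {a b : ℕ} (ha : 1 ≤ a) (hb : 1 ≤ b) :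
    continuantMatrix (l ++ [a, b - 1, 1, a - 1] ++ l.reverse) 0 0 =
      b * continuantMatrix (l ++ [a]) 0 0 ^ 2 := by
  have hab : 1 ≤ a * b := Nat.one_le_iff_ne_zero.mpr (by positivity)
  rw [continuantMatrix_append, continuantMatrix_append, continuantMatrix_append,
    continuantMatrix_reverse, continuantMatrix_fold_middle ha hb, continuantMatrix_cons,
    continuantMatrix_nil, mul_one]
  simp only [mul_apply, Fin.sum_univ_two, transpose_apply, of_apply, cons_val', cons_val_zero,
    cons_val_one, cons_val_fin_one]
  zify [hab]
  ring

/-- If `q` is the denominator in lowest terms of `[a₁, …, aᵣ]` (the list `M ++ [a]`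
with `a = aᵣ ≥ 2`) and `b ≥ 2`, then the denominator in lowest terms of
`[a₁, …, aᵣ, b - 1, 1, aᵣ - 1, aᵣ₋₁, …, a₁]` equals `b q²`. -/
theorem folded_denominator (M : List ℕ) (a b : ℕ) (hM : ∀ x ∈ M, 0 < x)
    (ha : 2 ≤ a) (hb : 2 ≤ b) :
    (cfVal (M ++ [a, b - 1, 1, a - 1] ++ M.reverse)).den =
      b * (cfVal (M ++ [a])).den ^ 2 := by
  have hfold : ∀ x ∈ M ++ [a, b - 1, 1, a - 1] ++ M.reverse, 0 < x := by
    simp only [List.forall_mem_append, List.forall_mem_cons, List.mem_reverse, List.not_mem_nil,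
      IsEmpty.forall_iff, implies_true, and_true]
    exact ⟨⟨hM, by omega, by omega, by omega, by omega⟩, hM⟩
  have hprefix : ∀ x ∈ M ++ [a], 0 < x := by
    simp only [List.forall_mem_append, List.forall_mem_cons, List.not_mem_nil,
      IsEmpty.forall_iff, implies_true, and_true]
    exact ⟨hM, by omega⟩
  rw [den_cfVal_s9 hfold, den_cfVal_s9 hprefix,
    continuantMatrix_fold_zero_zero M (by omega) (by omega)]
end

section
/- For q = 54 = 2·3^3, for every integer a with 1 ≤ a < 54 and gcd(a, 54) = 1, every finite simple continued fraction expansion a/54 = [a_1, …, a_r] (each a_i a positive integer) has some partial quotient a_i ≥ 5. In particular, the bound 5 in the statement 'for q = 2^n·3^m there exists a coprime a with all partial quotients of a/q at most 5' is optimal. -/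
theorem cfVal_mem_Icc {L : List ℕ} (hL : ∀ x ∈ L, 0 < x) : cfVal L ∈ Set.Icc (0 : ℚ) 1 := by
  induction L with
  | nil => simp [cfVal]
  | cons a l ih =>
    obtain ⟨hl₀, -⟩ := ih fun x hx => hL x (List.mem_cons_of_mem a hx)
    have ha : (1 : ℚ) ≤ a := by exact_mod_cast hL a List.mem_cons_self
    simp only [cfVal, Set.mem_Icc]
    exact ⟨by positivity, (div_le_one (by linarith)).2 (by linarith)⟩

theorem cfVal_notMem_of_closed {S : Set ℚ} {N : ℕ} (h₀ : 0 ∉ S)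
    (hS : ∀ k : ℕ, 0 < k → k < N → ∀ y ∈ Set.Icc (0 : ℚ) 1, 1 / (k + y) ∈ S → y ∈ S)
    {L : List ℕ} (hpos : ∀ x ∈ L, 0 < x) (hlt : ∀ x ∈ L, x < N) : cfVal L ∉ S := by
  induction L with
  | nil => exact h₀
  | cons a l ih =>
    have hl : ∀ x ∈ l, 0 < x := fun x hx => hpos x (List.mem_cons_of_mem a hx)
    exact fun hmem => ih hl (fun x hx => hlt x (List.mem_cons_of_mem a hx)) <|
      hS a (hpos a List.mem_cons_self) (hlt a List.mem_cons_self) _ (cfVal_mem_Icc hl) hmem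

def ratios (T : Finset (ℕ × ℕ)) : Set ℚ :=
  (fun pq : ℕ × ℕ => (pq.1 : ℚ) / pq.2) '' T

theorem zero_notMem_ratios {T : Finset (ℕ × ℕ)} (hT : ∀ pq ∈ T, 0 < pq.1 ∧ 0 < pq.2) :
    0 ∉ ratios T := by
  rintro ⟨⟨p, q⟩, hpq, h⟩
  obtain ⟨hp, hq⟩ := hT _ hpq
  exact (div_pos (Nat.cast_pos.2 hp) (Nat.cast_pos.2 hq)).ne' h

theorem mem_ratios_of_one_div_add_mem {T : Finset (ℕ × ℕ)} {N : ℕ}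
    (hT : ∀ pq ∈ T, ∀ k ∈ Finset.Ioo 0 N, k * pq.1 ≤ pq.2 → pq.2 ≤ k * pq.1 + pq.1 →
      (pq.2 - k * pq.1, pq.1) ∈ T)
    (hpos : ∀ pq ∈ T, 0 < pq.1 ∧ 0 < pq.2) (k : ℕ) (hk : 0 < k) (hkN : k < N)
    (y : ℚ) (hy : y ∈ Set.Icc (0 : ℚ) 1) (hmem : 1 / (k + y) ∈ ratios T) : y ∈ ratios T := by
  obtain ⟨⟨p, q⟩, hpq, hx⟩ := hmem
  obtain ⟨hp, hq⟩ := hpos _ hpq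
  have hp' : (0 : ℚ) < p := Nat.cast_pos.2 hp
  have hq' : (0 : ℚ) < q := Nat.cast_pos.2 hq
  have hky : (0 : ℚ) < k + y := by have : (0 : ℚ) < k := Nat.cast_pos.2 hk; linarith [hy.1]
  have hqp : (q : ℚ) = (k + y) * p := by
    field_simp at hx
    linarith
  have hlo : k * p ≤ q := by exact_mod_cast (show (k : ℚ) * p ≤ q by nlinarith [hy.1])
  have hhi : q ≤ k * p + p := by exact_mod_cast (show (q : ℚ) ≤ k * p + p by nlinarith [hy.2])
  refine ⟨_, hT _ hpq k (Finset.mem_Ioo.2 ⟨hk, hkN⟩) hlo hhi, ?_⟩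
  simp only [Nat.cast_sub hlo, Nat.cast_mul, hqp]
  field_simp
  ring

/-- The pairs `(p, q)` reached from the pairs `(a, 54)` by Euclidean steps with quotients
`1, …, 4`. -/
def orbit54 : Finset (ℕ × ℕ) :=
  ((Finset.range 54).filter (Nat.Coprime · 54)).image (·, 54) ∪
    {(1, 53), (1, 10), (5, 49), (1, 7), (7, 47), (2, 13), (4, 25), (3, 17), (3, 16), (11, 43),
      (13, 41), (8, 23), (17, 37), (19, 35), (23, 31), (16, 19), (25, 29), (7, 8), (10, 11)}

theorem orbit54_pos : ∀ pq ∈ orbit54, 0 < pq.1 ∧ 0 < pq.2 := by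
  decide

theorem orbit54_closed : ∀ pq ∈ orbit54, ∀ k ∈ Finset.Ioo 0 5, k * pq.1 ≤ pq.2 →
    pq.2 ≤ k * pq.1 + pq.1 → (pq.2 - k * pq.1, pq.1) ∈ orbit54 := by
  decide

theorem zaremba_fiftyfour_optimal_general (a : ℕ) (ha' : a < 54)
    (hgcd : Nat.gcd a 54 = 1) (L : List ℕ) (hL : ∀ x ∈ L, 0 < x)
    (h : (a : ℚ) / 54 = cfVal L) :
    ∃ x ∈ L, 5 ≤ x := by
  by_contra! hsmall
  have hmem : (a : ℚ) / 54 ∈ ratios orbit54 :=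
    ⟨(a, 54), by simp [orbit54, ha', Nat.Coprime, hgcd], by simp⟩
  refine cfVal_notMem_of_closed (zero_notMem_ratios orbit54_pos)
    (mem_ratios_of_one_div_add_mem orbit54_closed orbit54_pos) hL hsmall ?_
  exact h ▸ hmem

/-- For `q = 54 = 2 · 3³`, every continued fraction expansion of every reduced
fraction `a/54` has some partial quotient at least `5`; so the constant `5`
for `q = 2^n 3^m` is optimal. -/
theorem zaremba_fiftyfour_optimal (a : ℕ) (ha : 1 ≤ a) (ha' : a < 54)
    (hgcd : Nat.gcd a 54 = 1) (L : List ℕ) (hL : ∀ x ∈ L, 0 < x)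
    (h : (a : ℚ) / 54 = cfVal L) :
    ∃ x ∈ L, 5 ≤ x :=
  zaremba_fiftyfour_optimal_general a ha' hgcd L hL h
end
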